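/- Every sharply orthocomplete Archimedean atomic lattice effect algebra is a complete lattice effect algebra. -/

import Mathlib

universe u v

/-- An effect algebra: a partial algebra `(E; ⊕, 0, 1)` with `0 ≠ 1`, where `⊕` is
partially defined (domain `D`), commutative and associative where defined, every
element has a unique orthosupplement (`compl`, skolemizing axiom (Eiii)), and
`1 ⊕ x` defined implies `x = 0`. -/
structure EffectAlgebra (E : Type u) where
  D : E → E → Prop
  oplus : E → E → E
  zero : E
  one : E
  zero_ne_one : zero ≠ one
  D_comm : ∀ x y, D x y → D y x
  oplus_comm : ∀ x y, D x y → oplus x y = oplus y x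
  assoc : ∀ x y z, D x y → D (oplus x y) z →
      D y z ∧ D x (oplus y z) ∧ oplus (oplus x y) z = oplus x (oplus y z)
  assoc' : ∀ x y z, D y z → D x (oplus y z) →
      D x y ∧ D (oplus x y) z ∧ oplus (oplus x y) z = oplus x (oplus y z)
  compl : E → E
  D_compl : ∀ x, D x (compl x)
  oplus_compl : ∀ x, oplus x (compl x) = one
  compl_unique : ∀ x y, D x y → oplus x y = one → y = compl x
  one_max : ∀ x, D one x → x = zero

namespace EffectAlgebra

variable {E : Type u} (A : EffectAlgebra E)

/-- The induced order: `x ≤ y` iff `x ⊕ z = y` for some `z`. -/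
def le (x y : E) : Prop := ∃ z, A.D x z ∧ A.oplus x z = y

def IsLB (S : Set E) (m : E) : Prop := ∀ x ∈ S, A.le m x
def IsUB (S : Set E) (m : E) : Prop := ∀ x ∈ S, A.le x m

/-- `m` is the infimum of `S` computed within the subposet `P`. -/
def IsInfIn (P : Set E) (S : Set E) (m : E) : Prop :=
  m ∈ P ∧ A.IsLB S m ∧ ∀ z ∈ P, A.IsLB S z → A.le z m

/-- `m` is the supremum of `S` computed within the subposet `P`. -/
def IsSupIn (P : Set E) (S : Set E) (m : E) : Prop :=
  m ∈ P ∧ A.IsUB S m ∧ ∀ z ∈ P, A.IsUB S z → A.le m z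

/-- `w` is sharp iff the meet `w ∧ w'` exists in `E` and equals `0`. -/
def Sharp (w : E) : Prop := A.IsInfIn Set.univ {w, A.compl w} A.zero

/-- The set `S(E)` of sharp elements. -/
def sharpSet : Set E := {w | A.Sharp w}

def HasMeet (x y : E) : Prop := ∃ m, A.IsInfIn Set.univ {x, y} m
def HasJoin (x y : E) : Prop := ∃ j, A.IsSupIn Set.univ {x, y} j

/-- Every `x` has a least sharp element above it, which is the infimum of the sharp
elements above `x` both in `E` and in `S(E)`. -/
def SharplyDominating : Prop :=
  ∀ x : E, ∃ w, A.Sharp w ∧ A.le x w ∧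
    A.IsInfIn Set.univ {v | A.Sharp v ∧ A.le x v} w ∧
    A.IsInfIn A.sharpSet {v | A.Sharp v ∧ A.le x v} w

/-- Sharply dominating, and `x ∧ w` exists for every `x ∈ E`, `w ∈ S(E)`. -/
def SDominating : Prop :=
  A.SharplyDominating ∧ ∀ x w : E, A.Sharp w → A.HasMeet x w

end EffectAlgebra

/-- `SumDef A l s` : the orthosum of the finite list `l` is defined and equals `s`. -/
inductive EffectAlgebra.SumDef {E : Type u} (A : EffectAlgebra E) : List E → E → Prop
  | nil : EffectAlgebra.SumDef A [] A.zero
  | cons {x : E} {l : List E} {s : E} : EffectAlgebra.SumDef A l s → A.D x s →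
      EffectAlgebra.SumDef A (x :: l) (A.oplus x s)

namespace EffectAlgebra

variable {E : Type u} (A : EffectAlgebra E)

/-- A family is orthogonal iff every finite subfamily has a defined orthosum. -/
def Orthogonal {ι : Type v} (x : ι → E) : Prop :=
  ∀ l : List ι, l.Nodup → ∃ s, A.SumDef (l.map x) s

/-- The set of finite partial orthosums of a family. -/
def finiteSums {ι : Type v} (x : ι → E) : Set E :=
  {s | ∃ l : List ι, l.Nodup ∧ A.SumDef (l.map x) s}

/-- `v = ⊕ x` : the family is orthogonal and `v` is the supremum in `E` of all
finite partial orthosums. -/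
def HasOrthoSum {ι : Type v} (x : ι → E) (v : E) : Prop :=
  A.Orthogonal x ∧ A.IsSupIn Set.univ (A.finiteSums x) v

/-- Every family dominated elementwise by an orthogonal family of sharp
elements has an orthosum. -/
def SharplyOrthocomplete : Prop :=
  ∀ (ι : Type u) (x w : ι → E), (∀ k, A.Sharp (w k)) → A.Orthogonal w →
    (∀ k, A.le (x k) (w k)) → ∃ v, A.HasOrthoSum x v

/-- `c` is central: for every `y` the meets `y ∧ c`, `y ∧ c'` exist and
`y = (y ∧ c) ∨ (y ∧ c')`. -/
def Central (c : E) : Prop :=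
  ∀ y : E, ∃ m₁ m₂, A.IsInfIn Set.univ {y, c} m₁ ∧
    A.IsInfIn Set.univ {y, A.compl c} m₂ ∧ A.IsSupIn Set.univ {m₁, m₂} y

/-- The center `C(E)`. -/
def centerSet : Set E := {c | A.Central c}

def CentrallyDominating : Prop :=
  ∀ x : E, ∃ c, A.Central c ∧ A.le x c ∧
    A.IsInfIn Set.univ {d | A.Central d ∧ A.le x d} c ∧
    A.IsInfIn A.centerSet {d | A.Central d ∧ A.le x d} c

def CentrallyOrthocomplete : Prop :=
  ∀ (ι : Type u) (x c : ι → E), (∀ k, A.Central (c k)) → A.Orthogonal c →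
    (∀ k, A.le (x k) (c k)) → ∃ v, A.HasOrthoSum x v

/-- `P` is bifull in `E`: for `S ⊆ P`, the join of `S` in `P` exists iff the join
of `S` in `E` exists, and then they coincide. -/
def Bifull (P : Set E) : Prop :=
  ∀ S ⊆ P, (∀ s, A.IsSupIn P S s → A.IsSupIn Set.univ S s) ∧
    (∀ s, A.IsSupIn Set.univ S s → A.IsSupIn P S s)

/-- The subposet `P` is a complete lattice: every subset of `P` has a supremum
(and an infimum) computed within `P`. -/
def CompleteIn (P : Set E) : Prop :=
  ∀ S ⊆ P, (∃ s, A.IsSupIn P S s) ∧ (∃ m, A.IsInfIn P S m)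

/-- `E` is a complete lattice. -/
def Complete : Prop :=
  ∀ S : Set E, (∃ s, A.IsSupIn Set.univ S s) ∧ (∃ m, A.IsInfIn Set.univ S m)

/-- The induced order of `E` is a lattice. -/
def LatticeOrdered : Prop := ∀ x y : E, A.HasMeet x y ∧ A.HasJoin x y

/-- `x ↔ y` : `x ∨ y = x ⊕ (y ⊖ (x ∧ y))`. -/
def Compatible (x y : E) : Prop :=
  ∃ m j z, A.IsInfIn Set.univ {x, y} m ∧ A.IsSupIn Set.univ {x, y} j ∧
    A.D m z ∧ A.oplus m z = y ∧ A.D x z ∧ A.oplus x z = j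

/-- An MV-effect algebra: a lattice effect algebra all of whose pairs of elements
are compatible. -/
def MV : Prop := A.LatticeOrdered ∧ ∀ x y : E, A.Compatible x y

/-- `nx = x ⊕ ⋯ ⊕ x` (`n` times) is defined. -/
def nTimesDef (n : ℕ) (x : E) : Prop := ∃ s, A.SumDef (List.replicate n x) s

/-- `ord x < ∞` for every nonzero `x`. -/
def IsArchimedean : Prop := ∀ x : E, x ≠ A.zero → ∃ n : ℕ, ¬ A.nTimesDef n x

def Atom (a : E) : Prop := a ≠ A.zero ∧ ∀ b, A.le b a → b = A.zero ∨ b = a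

def Atomic : Prop := ∀ x : E, x ≠ A.zero → ∃ a, A.Atom a ∧ A.le a x

/-- The subposet `P` (closed under `'`) is an orthomodular lattice. -/
def OrthomodularIn (P : Set E) : Prop :=
  (∀ x ∈ P, ∀ y ∈ P, (∃ m, A.IsInfIn P {x, y} m) ∧ (∃ j, A.IsSupIn P {x, y} j)) ∧
  A.zero ∈ P ∧ A.one ∈ P ∧ (∀ x ∈ P, A.compl x ∈ P) ∧
  (∀ x ∈ P, A.IsInfIn P {x, A.compl x} A.zero ∧ A.IsSupIn P {x, A.compl x} A.one) ∧
  (∀ x ∈ P, ∀ y ∈ P, A.le x y →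
    ∃ m, A.IsInfIn P {y, A.compl x} m ∧ A.IsSupIn P {x, m} y)

def DistributiveIn (P : Set E) : Prop :=
  ∀ x ∈ P, ∀ y ∈ P, ∀ z ∈ P, ∀ jyz mxy mxz m : E,
    A.IsSupIn P {y, z} jyz → A.IsInfIn P {x, y} mxy → A.IsInfIn P {x, z} mxz →
    A.IsInfIn P {x, jyz} m → A.IsSupIn P {mxy, mxz} m

/-- The subposet `P` is a Boolean algebra (complemented distributive lattice with
bounds, complement given by `'`). -/
def BooleanIn (P : Set E) : Prop :=
  (∀ x ∈ P, ∀ y ∈ P, (∃ m, A.IsInfIn P {x, y} m) ∧ (∃ j, A.IsSupIn P {x, y} j)) ∧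
  A.zero ∈ P ∧ A.one ∈ P ∧ (∀ x ∈ P, A.compl x ∈ P) ∧
  (∀ x ∈ P, A.IsInfIn P {x, A.compl x} A.zero ∧ A.IsSupIn P {x, A.compl x} A.one) ∧
  A.DistributiveIn P

/-- A block: a maximal set of pairwise compatible elements. -/
def Block (M : Set E) : Prop :=
  (∀ x ∈ M, ∀ y ∈ M, A.Compatible x y) ∧
  ∀ N : Set E, M ⊆ N → (∀ x ∈ N, ∀ y ∈ N, A.Compatible x y) → N = M

def AtomIn (M : Set E) (a : E) : Prop :=
  a ∈ M ∧ a ≠ A.zero ∧ ∀ b ∈ M, A.le b a → b = A.zero ∨ b = a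

def AtomicIn (M : Set E) : Prop :=
  ∀ x ∈ M, x ≠ A.zero → ∃ a, A.AtomIn M a ∧ A.le a x

end EffectAlgebra

/-!
In an Archimedean atomic lattice effect algebra every atom `a` has a finite order
`n_a`, and `n_a • a` is sharp; for distinct orthogonal atoms these sharp covers are again
orthogonal. To find `⋁ T`, take by Zorn's lemma a maximal multiplicity function `f`
on pairwise orthogonal atoms whose finite partial sums of the family `f e • e` lie below
every upper bound of `T`. This family is dominated by the orthogonal sharp family
`n_e • e`, so sharp orthocompleteness provides its sum `v`, which lies below every upper
bound of `T`. If some `t ∈ T` were not below `v`, an atom `b ≤ (t ∨ v) ⊖ v` would let us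
raise `f b` by one, contradicting maximality.
-/

lemma IsChain.exists_forall_eq_sSup_eval {α : Type*} {c : Set (α → ℕ)}
    (hc : IsChain (· ≤ ·) c) (hne : c.Nonempty)
    (hbdd : ∀ a, BddAbove ((fun g => g a) '' c)) (s : Finset α) :
    ∃ g ∈ c, ∀ a ∈ s, g a = sSup ((fun g => g a) '' c) := by
  classical
  have hle : ∀ g ∈ c, ∀ a, g a ≤ sSup ((fun g => g a) '' c) :=
    fun g hg a => le_csSup (hbdd a) ⟨g, hg, rfl⟩
  induction s using Finset.induction_on with
  | empty => exact hne.imp fun g hg => ⟨hg, by simp⟩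
  | insert a s _ ih =>
    obtain ⟨h, hh, hhs⟩ := ih
    obtain ⟨g, hg, hga⟩ := Nat.sSup_mem (hne.image fun g => g a) (hbdd a)
    rcases hc.total hh hg with hhg | hgh
    · refine ⟨g, hg, (Finset.forall_mem_insert _ _ _).mpr ⟨hga, fun a' ha' => ?_⟩⟩
      exact (hle g hg a').antisymm (hhs a' ha' ▸ hhg a')
    · refine ⟨h, hh, (Finset.forall_mem_insert _ _ _).mpr ⟨?_, hhs⟩⟩
      exact (hle h hh a).antisymm (hga ▸ hgh a)

namespace EffectAlgebra

variable {E : Type u} (A : EffectAlgebra E)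

section Basic

lemma compl_one : A.compl A.one = A.zero :=
  A.one_max _ (A.D_compl A.one)

lemma D_one_zero : A.D A.one A.zero := by
  simpa only [A.compl_one] using A.D_compl A.one

lemma oplus_one_zero : A.oplus A.one A.zero = A.one := by
  simpa only [A.compl_one] using A.oplus_compl A.one

lemma compl_oplus_zero (x : E) :
    A.D (A.compl x) A.zero ∧ A.oplus (A.compl x) A.zero = A.compl x := by
  have h1 : A.D (A.oplus x (A.compl x)) A.zero := by
    rw [A.oplus_compl]; exact A.D_one_zero
  obtain ⟨hD1, hD2, heq⟩ := A.assoc x (A.compl x) A.zero (A.D_compl x) h1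
  have h2 : A.oplus x (A.oplus (A.compl x) A.zero) = A.one := by
    rw [← heq, A.oplus_compl, A.oplus_one_zero]
  exact ⟨hD1, A.compl_unique x _ hD2 h2⟩

lemma compl_compl (x : E) : A.compl (A.compl x) = x := by
  have hD : A.D (A.compl x) x := A.D_comm _ _ (A.D_compl x)
  have he : A.oplus (A.compl x) x = A.one := by
    rw [A.oplus_comm _ _ hD, A.oplus_compl]
  exact (A.compl_unique (A.compl x) x hD he).symm

lemma D_zero_right (x : E) : A.D x A.zero := by
  simpa only [A.compl_compl] using (A.compl_oplus_zero (A.compl x)).1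

lemma oplus_zero (x : E) : A.oplus x A.zero = x := by
  simpa only [A.compl_compl] using (A.compl_oplus_zero (A.compl x)).2

lemma D_zero_left (x : E) : A.D A.zero x := A.D_comm _ _ (A.D_zero_right x)

lemma zero_oplus (x : E) : A.oplus A.zero x = x := by
  rw [← A.oplus_comm x A.zero (A.D_zero_right x), A.oplus_zero]

lemma le_refl (x : E) : A.le x x := ⟨A.zero, A.D_zero_right x, A.oplus_zero x⟩

lemma zero_le (x : E) : A.le A.zero x := ⟨x, A.D_zero_left x, A.zero_oplus x⟩

lemma le_oplus_left {x y : E} (h : A.D x y) : A.le x (A.oplus x y) := ⟨y, h, rfl⟩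

lemma le_oplus_right {x y : E} (h : A.D x y) : A.le y (A.oplus x y) :=
  ⟨x, A.D_comm _ _ h, A.oplus_comm _ _ (A.D_comm _ _ h)⟩

lemma le_trans {x y z : E} (h1 : A.le x y) (h2 : A.le y z) : A.le x z := by
  obtain ⟨u, hu, rfl⟩ := h1
  obtain ⟨v, hv, rfl⟩ := h2
  obtain ⟨-, hD, heq⟩ := A.assoc x u v hu hv
  exact ⟨A.oplus u v, hD, heq.symm⟩

lemma oplus_compl_oplus {a b : E} (h : A.D a b) :
    A.D b (A.compl (A.oplus a b)) ∧ A.oplus b (A.compl (A.oplus a b)) = A.compl a := by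
  obtain ⟨hD1, hD2, heq⟩ := A.assoc a b (A.compl (A.oplus a b)) h (A.D_compl _)
  have h3 : A.oplus a (A.oplus b (A.compl (A.oplus a b))) = A.one := by
    rw [← heq, A.oplus_compl]
  exact ⟨hD1, A.compl_unique a _ hD2 h3⟩

lemma compl_oplus_oplus_left {a b : E} (h : A.D a b) :
    A.oplus (A.compl (A.oplus a b)) a = A.compl b := by
  obtain ⟨hD, he⟩ := A.oplus_compl_oplus h
  have hD2 : A.D (A.oplus b (A.compl (A.oplus a b))) a := by
    rw [he]; exact A.D_comm _ _ (A.D_compl a)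
  obtain ⟨-, hD4, heq⟩ := A.assoc b (A.compl (A.oplus a b)) a hD hD2
  have h5 : A.oplus b (A.oplus (A.compl (A.oplus a b)) a) = A.one := by
    rw [← heq, he, A.oplus_comm _ _ (A.D_comm _ _ (A.D_compl a)), A.oplus_compl]
  exact A.compl_unique b _ hD4 h5

lemma D_le_compl {a b : E} (h : A.D a b) : A.le b (A.compl a) :=
  ⟨_, (A.oplus_compl_oplus h).1, (A.oplus_compl_oplus h).2⟩

lemma le_compl_D {x y : E} (h : A.le y (A.compl x)) : A.D x y := by
  obtain ⟨u, hu, he⟩ := h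
  have hD : A.D (A.compl x) x := A.D_comm _ _ (A.D_compl x)
  rw [← he] at hD
  exact (A.assoc' x y u hu (A.D_comm _ _ hD)).1

lemma compl_injective {x y : E} (h : A.compl x = A.compl y) : x = y := by
  rw [← A.compl_compl x, h, A.compl_compl]

lemma oplus_left_cancel {a b c : E} (h1 : A.D a b) (h2 : A.D a c)
    (he : A.oplus a b = A.oplus a c) : b = c := by
  apply A.compl_injective
  rw [← A.compl_oplus_oplus_left h1, ← A.compl_oplus_oplus_left h2, he]

lemma oplus_eq_zero {u v : E} (h : A.D u v) (he : A.oplus u v = A.zero) :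
    u = A.zero ∧ v = A.zero := by
  have hD : A.D (A.oplus u v) A.one := by
    rw [he]; exact A.D_zero_left A.one
  have hv : v = A.zero := A.one_max v (A.D_comm _ _ (A.assoc u v A.one h hD).1)
  subst hv
  rw [A.oplus_zero] at he
  exact ⟨he, rfl⟩

lemma le_zero {x : E} (h : A.le x A.zero) : x = A.zero := by
  obtain ⟨u, hu, he⟩ := h
  exact (A.oplus_eq_zero hu he).1

lemma le_antisymm {x y : E} (h1 : A.le x y) (h2 : A.le y x) : x = y := by
  obtain ⟨u, hu, rfl⟩ := h1
  obtain ⟨v, hv, he⟩ := h2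
  obtain ⟨hD1, hD2, heq⟩ := A.assoc x u v hu hv
  rw [heq] at he
  have huv := A.oplus_left_cancel hD2 (A.D_zero_right x) (he.trans (A.oplus_zero x).symm)
  rw [(A.oplus_eq_zero hD1 huv).1, A.oplus_zero]

lemma compl_anti {x y : E} (h : A.le x y) : A.le (A.compl y) (A.compl x) := by
  obtain ⟨u, hu, rfl⟩ := h
  obtain ⟨hD1, hD2, heq⟩ := A.assoc x u (A.compl (A.oplus x u)) hu (A.D_compl _)
  have h3 : A.oplus u (A.compl (A.oplus x u)) = A.compl x :=
    A.compl_unique x _ hD2 (by rw [← heq, A.oplus_compl])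
  exact ⟨u, A.D_comm _ _ hD1, by rw [A.oplus_comm _ _ (A.D_comm _ _ hD1), h3]⟩

lemma le_compl_comm {x y : E} (h : A.le x (A.compl y)) : A.le y (A.compl x) := by
  simpa only [A.compl_compl] using A.compl_anti h

lemma D_mono_right {x y z : E} (h : A.D x y) (hz : A.le z y) : A.D x z :=
  A.le_compl_D (A.le_trans hz (A.D_le_compl h))

lemma D_mono_left {x y z : E} (h : A.D x y) (hz : A.le z x) : A.D z y :=
  A.D_comm _ _ (A.D_mono_right (A.D_comm _ _ h) hz)

lemma oplus_le_oplus_right {x y y' : E} (h : A.le y y') (hD : A.D x y') :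
    A.le (A.oplus x y) (A.oplus x y') := by
  obtain ⟨u, hu, rfl⟩ := h
  obtain ⟨-, hD2, heq⟩ := A.assoc' x y u hu hD
  exact ⟨u, hD2, heq⟩

lemma le_of_oplus_le_oplus {z x y : E} (h1 : A.D z x) (h2 : A.D z y)
    (h : A.le (A.oplus z x) (A.oplus z y)) : A.le x y := by
  obtain ⟨u, hu, he⟩ := h
  obtain ⟨hD1, hD2, heq⟩ := A.assoc z x u h1 hu
  rw [heq] at he
  exact ⟨u, hD1, A.oplus_left_cancel hD2 h2 he⟩

lemma le_of_oplus_eq_oplus {x j d y : E} (hxj : A.le x j) (hjd : A.D j d) (hxy : A.D x y)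
    (h : A.oplus j d = A.oplus x y) : A.le d y := by
  obtain ⟨p, hp, rfl⟩ := hxj
  obtain ⟨hpd, hD, heq⟩ := A.assoc x p d hp hjd
  rw [heq] at h
  rw [← A.oplus_left_cancel hD hxy h]
  exact A.le_oplus_right hpd

lemma sharp_zero : A.Sharp A.zero :=
  ⟨Set.mem_univ _, fun x _ => A.zero_le x, fun _ _ hz => hz _ (Set.mem_insert _ _)⟩

end Basic

section Lattice

variable (hL : A.LatticeOrdered)

noncomputable def meet (x y : E) : E := (hL x y).1.choose

noncomputable def join (x y : E) : E := (hL x y).2.choose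

lemma meet_spec (x y : E) : A.IsInfIn Set.univ {x, y} (A.meet hL x y) :=
  (hL x y).1.choose_spec

lemma join_spec (x y : E) : A.IsSupIn Set.univ {x, y} (A.join hL x y) :=
  (hL x y).2.choose_spec

lemma meet_le_left (x y : E) : A.le (A.meet hL x y) x :=
  (A.meet_spec hL x y).2.1 x (Set.mem_insert _ _)

lemma meet_le_right (x y : E) : A.le (A.meet hL x y) y :=
  (A.meet_spec hL x y).2.1 y (Set.mem_insert_of_mem _ rfl)

lemma le_meet {x y z : E} (h1 : A.le z x) (h2 : A.le z y) : A.le z (A.meet hL x y) :=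
  (A.meet_spec hL x y).2.2 z (Set.mem_univ z) (by rintro w (rfl | rfl) <;> assumption)

lemma le_join_left (x y : E) : A.le x (A.join hL x y) :=
  (A.join_spec hL x y).2.1 x (Set.mem_insert _ _)

lemma le_join_right (x y : E) : A.le y (A.join hL x y) :=
  (A.join_spec hL x y).2.1 y (Set.mem_insert_of_mem _ rfl)

lemma join_le {x y z : E} (h1 : A.le x z) (h2 : A.le y z) : A.le (A.join hL x y) z :=
  (A.join_spec hL x y).2.2 z (Set.mem_univ z) (by rintro w (rfl | rfl) <;> assumption)

lemma compl_join (x y : E) :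
    A.compl (A.join hL x y) = A.meet hL (A.compl x) (A.compl y) := by
  apply A.le_antisymm
  · exact A.le_meet hL (A.compl_anti (A.le_join_left hL x y))
      (A.compl_anti (A.le_join_right hL x y))
  · apply A.le_compl_comm
    exact A.join_le hL (A.le_compl_comm (A.meet_le_left hL _ _))
      (A.le_compl_comm (A.meet_le_right hL _ _))

/-- Writing `x ⊕ y = (x ∨ y) ⊕ d`, cancellation shows `d ≤ x` and `d ≤ y`. -/
lemma oplus_eq_join {x y : E} (hD : A.D x y) (hm : A.meet hL x y = A.zero) :
    A.oplus x y = A.join hL x y := by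
  obtain ⟨d, hd, hjd⟩ :=
    A.join_le hL (A.le_oplus_left hD) (A.le_oplus_right hD)
  have hdy : A.le d y := A.le_of_oplus_eq_oplus (A.le_join_left hL x y) hd hD hjd
  have hdx : A.le d x := A.le_of_oplus_eq_oplus (A.le_join_right hL x y) hd
    (A.D_comm _ _ hD) (hjd.trans (A.oplus_comm _ _ hD))
  have hd0 : d = A.zero := A.le_zero (hm ▸ A.le_meet hL hdx hdy)
  rw [← hjd, hd0, A.oplus_zero]

lemma meet_eq_zero_of_sharp {u x : E} (hu : A.Sharp u) (hx : A.le x (A.compl u)) :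
    A.meet hL u x = A.zero := by
  refine A.le_zero (hu.2.2 _ (Set.mem_univ _) ?_)
  rintro w (rfl | rfl)
  · exact A.meet_le_left hL _ _
  · exact A.le_trans (A.meet_le_right hL _ _) hx

end Lattice

section Sums

lemma sumDef_nil_eq {s : E} (h : A.SumDef [] s) : s = A.zero := by
  cases h; rfl

lemma sumDef_cons_inv {a : E} {l : List E} {s : E} (h : A.SumDef (a :: l) s) :
    ∃ u, A.SumDef l u ∧ A.D a u ∧ s = A.oplus a u := by
  cases h with
  | cons h hD => exact ⟨_, h, hD, rfl⟩

lemma sumDef_unique {l : List E} {s s' : E} (h : A.SumDef l s) (h' : A.SumDef l s') :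
    s = s' := by
  induction l generalizing s s' with
  | nil => rw [A.sumDef_nil_eq h, A.sumDef_nil_eq h']
  | cons a l ih =>
    obtain ⟨u, hu, _, rfl⟩ := A.sumDef_cons_inv h
    obtain ⟨u', hu', _, rfl⟩ := A.sumDef_cons_inv h'
    rw [ih hu hu']

lemma sumDef_perm {l l' : List E} (hp : l.Perm l') {s : E} (h : A.SumDef l s) :
    A.SumDef l' s := by
  induction hp generalizing s with
  | nil => exact h
  | cons a _ ih =>
    obtain ⟨u, hu, hD, rfl⟩ := A.sumDef_cons_inv h
    exact SumDef.cons (ih hu) hD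
  | swap a b l =>
    obtain ⟨u, hu, hDb, rfl⟩ := A.sumDef_cons_inv h
    obtain ⟨v, hv, hDa, rfl⟩ := A.sumDef_cons_inv hu
    obtain ⟨hDba, hD2, heq⟩ := A.assoc' b a v hDa hDb
    rw [A.oplus_comm _ _ hDba] at hD2
    obtain ⟨hDbv, hD4, heq2⟩ := A.assoc a b v (A.D_comm _ _ hDba) hD2
    have hswap : A.oplus b (A.oplus a v) = A.oplus a (A.oplus b v) := by
      rw [← heq, A.oplus_comm _ _ hDba, heq2]
    rw [hswap]
    exact SumDef.cons (SumDef.cons hv hDbv) hD4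
  | trans _ _ ih1 ih2 => exact ih2 (ih1 h)

lemma sumDef_map_const_zero {ι : Type v} (l : List ι) {s : E}
    (h : A.SumDef (l.map fun _ => A.zero) s) : s = A.zero := by
  induction l generalizing s with
  | nil => exact A.sumDef_nil_eq h
  | cons k l ih =>
    obtain ⟨u, hu, -, rfl⟩ := A.sumDef_cons_inv h
    rw [ih hu, A.oplus_zero]

lemma mem_finiteSums_self {ι : Type v} (x : ι → E) (k : ι) : x k ∈ A.finiteSums x :=
  ⟨[k], List.nodup_singleton k, by
    simpa only [List.map_singleton, A.oplus_zero] using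
      SumDef.cons (x := x k) SumDef.nil (A.D_zero_right _)⟩

end Sums

section Multiples

def nsmul (A : EffectAlgebra E) : ℕ → E → E
  | 0, _ => A.zero
  | n + 1, a => A.oplus a (nsmul A n a)

def nsmulDef (A : EffectAlgebra E) : ℕ → E → Prop
  | 0, _ => True
  | n + 1, a => nsmulDef A n a ∧ A.D a (A.nsmul n a)

lemma nsmul_one (a : E) : A.nsmul 1 a = a := A.oplus_zero a

lemma nsmulDef_one (a : E) : A.nsmulDef 1 a := ⟨trivial, A.D_zero_right a⟩

lemma sumDef_replicate {n : ℕ} {a : E} (h : A.nsmulDef n a) :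
    A.SumDef (List.replicate n a) (A.nsmul n a) := by
  induction n with
  | zero => exact SumDef.nil
  | succ n ih => exact SumDef.cons (ih h.1) h.2

lemma nTimesDef_iff {n : ℕ} {a : E} : A.nTimesDef n a ↔ A.nsmulDef n a := by
  refine ⟨?_, fun h => ⟨_, A.sumDef_replicate h⟩⟩
  rintro ⟨s, hs⟩
  induction n generalizing s with
  | zero => trivial
  | succ n ih =>
    obtain ⟨u, hu, hD, rfl⟩ := A.sumDef_cons_inv hs
    have h1 : A.nsmulDef n a := ih u hu
    exact ⟨h1, A.sumDef_unique hu (A.sumDef_replicate h1) ▸ hD⟩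

lemma nsmulDef_mono {k n : ℕ} {a : E} (hk : k ≤ n) (h : A.nsmulDef n a) :
    A.nsmulDef k a := by
  induction n with
  | zero => rwa [Nat.le_zero.mp hk]
  | succ n ih =>
    rcases Nat.lt_or_ge k (n + 1) with h' | h'
    · exact ih (Nat.lt_succ_iff.mp h') h.1
    · rwa [Nat.le_antisymm hk h']

lemma le_of_nsmulDef {k n : ℕ} {a : E} (hn : ¬ A.nsmulDef (n + 1) a)
    (hk : A.nsmulDef k a) : k ≤ n := by
  by_contra! h
  exact hn (A.nsmulDef_mono h hk)

lemma nsmul_le_succ {n : ℕ} {a : E} (h : A.nsmulDef (n + 1) a) :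
    A.le (A.nsmul n a) (A.nsmul (n + 1) a) :=
  A.le_oplus_right h.2

lemma nsmul_mono {k n : ℕ} {a : E} (hk : k ≤ n) (h : A.nsmulDef n a) :
    A.le (A.nsmul k a) (A.nsmul n a) := by
  induction n with
  | zero => rw [Nat.le_zero.mp hk]; exact A.le_refl _
  | succ n ih =>
    rcases Nat.lt_or_ge k (n + 1) with h' | h'
    · exact A.le_trans (ih (Nat.lt_succ_iff.mp h') h.1) (A.nsmul_le_succ h)
    · rw [Nat.le_antisymm hk h']; exact A.le_refl _

lemma le_nsmul {n : ℕ} {a : E} (hn : n ≠ 0) (h : A.nsmulDef n a) : A.le a (A.nsmul n a) := by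
  simpa only [A.nsmul_one] using A.nsmul_mono (Nat.one_le_iff_ne_zero.mpr hn) h

lemma exists_nsmulDef_maximal (hArch : A.IsArchimedean) {a : E} (ha : a ≠ A.zero) :
    ∃ n, n ≠ 0 ∧ A.nsmulDef n a ∧ ¬ A.nsmulDef (n + 1) a := by
  classical
  have hex : ∃ m, ¬ A.nsmulDef m a := by
    obtain ⟨N, hN⟩ := hArch a ha
    exact ⟨N, A.nTimesDef_iff.not.mp hN⟩
  obtain ⟨n, hn⟩ : ∃ n, Nat.find hex = n + 1 :=
    Nat.exists_eq_add_one.mpr (Nat.pos_of_ne_zero fun h => Nat.find_spec hex (h ▸ trivial))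
  refine ⟨n, fun h0 => ?_, not_not.mp (Nat.find_min hex (by omega)), hn ▸ Nat.find_spec hex⟩
  exact Nat.find_spec hex (by rw [hn, h0]; exact A.nsmulDef_one a)

end Multiples

section Atoms

lemma D_oplus_of_meet_eq_zero (hL : A.LatticeOrdered) {x y c : E} (hD : A.D x y)
    (hm : A.meet hL x y = A.zero) (hx : A.D x c) (hy : A.D y c) : A.D (A.oplus x y) c := by
  rw [A.oplus_eq_join hL hD hm]
  refine A.le_compl_D ?_
  rw [A.compl_join]
  exact A.le_meet hL (A.D_le_compl hx) (A.D_le_compl hy)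

/-- Induction on `j`: if `b ≤ (j + 1) • a = j • a ⊕ a`, then `j • a ∨ b` exceeds `j • a` by
`0` or by the atom `a`; in the second case `j • a ∧ b = 0` makes it `j • a ⊕ b`, and
cancellation gives `b = a`. -/
lemma not_le_nsmul_of_le_compl_nsmul (hL : A.LatticeOrdered) {a b : E} (ha : A.Atom a)
    (hb : A.Atom b) (hne : b ≠ a) {j : ℕ} (hj : A.nsmulDef j a)
    (hb' : A.le b (A.compl (A.nsmul j a))) : ¬ A.le b (A.nsmul j a) := by
  induction j with
  | zero => exact fun h => hb.1 (A.le_zero h)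
  | succ j ih =>
    intro hble
    have hb'' : A.le b (A.compl (A.nsmul j a)) :=
      A.le_trans hb' (A.compl_anti (A.nsmul_le_succ hj))
    have hnot : ¬ A.le b (A.nsmul j a) := ih hj.1 hb''
    obtain ⟨r, hr, hjr⟩ := A.le_join_left hL (A.nsmul j a) b
    have hra : A.le r a := by
      refine A.le_of_oplus_le_oplus hr (A.D_comm _ _ hj.2) ?_
      rw [hjr, ← A.oplus_comm _ _ hj.2]
      exact A.join_le hL (A.nsmul_le_succ hj) hble
    rcases ha.2 r hra with hr0 | hra
    · rw [hr0, A.oplus_zero] at hjr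
      exact hnot (hjr ▸ A.le_join_right hL _ _)
    · have hm : A.meet hL (A.nsmul j a) b = A.zero := by
        refine (hb.2 _ (A.meet_le_right hL _ _)).resolve_right fun hbm => hnot ?_
        exact hbm ▸ A.meet_le_left hL _ _
      have hDjb : A.D (A.nsmul j a) b := A.le_compl_D hb''
      refine hne (A.oplus_left_cancel hDjb (A.D_comm _ _ hj.2) ?_)
      rw [A.oplus_eq_join hL hDjb hm, ← hjr, hra]

lemma sharp_nsmul (hL : A.LatticeOrdered) (hAtomic : A.Atomic) {a : E} {n : ℕ}
    (ha : A.Atom a) (hn : A.nsmulDef n a) (hmax : ¬ A.nsmulDef (n + 1) a) :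
    A.Sharp (A.nsmul n a) := by
  refine ⟨Set.mem_univ _, fun x _ => A.zero_le x, fun z _ hz => ?_⟩
  have h1 : A.le z (A.nsmul n a) := hz _ (Set.mem_insert _ _)
  have h2 : A.le z (A.compl (A.nsmul n a)) := hz _ (Set.mem_insert_of_mem _ rfl)
  obtain rfl : z = A.zero := by
    by_contra hz0
    obtain ⟨b, hb, hbz⟩ := hAtomic z hz0
    have hb2 : A.le b (A.compl (A.nsmul n a)) := A.le_trans hbz h2
    by_cases hba : b = a
    · exact hmax ⟨hn, A.D_comm _ _ (A.le_compl_D (hba ▸ hb2))⟩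
    · exact A.not_le_nsmul_of_le_compl_nsmul hL ha hb hba hn hb2 (A.le_trans hbz h1)
  exact A.le_refl _

lemma D_nsmul_of_atom (hL : A.LatticeOrdered) {a b : E} (ha : A.Atom a) (hb : A.Atom b)
    (hne : b ≠ a) (hD : A.D a b) {n : ℕ} (hn : A.nsmulDef n a) : A.D (A.nsmul n a) b := by
  induction n with
  | zero => exact A.D_zero_left b
  | succ j ih =>
    have hDjb := ih hn.1
    have hm : A.meet hL (A.nsmul j a) b = A.zero := by
      refine (hb.2 _ (A.meet_le_right hL _ _)).resolve_right fun hbm => ?_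
      exact A.not_le_nsmul_of_le_compl_nsmul hL ha hb hne hn.1 (A.D_le_compl hDjb)
        (hbm ▸ A.meet_le_left hL _ _)
    have hDa := A.D_oplus_of_meet_eq_zero hL hDjb hm (A.D_comm _ _ hn.2) (A.D_comm _ _ hD)
    exact (A.assoc' a (A.nsmul j a) b hDjb (A.D_comm _ _ hDa)).2.1

lemma D_nsmul_of_sharp (hL : A.LatticeOrdered) {u b : E} (hu : A.Sharp u) (hD : A.D u b)
    {n : ℕ} (hn : A.nsmulDef n b) : A.D u (A.nsmul n b) := by
  induction n with
  | zero => exact A.D_zero_right u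
  | succ i ih =>
    have hDi := ih hn.1
    have hDb := A.D_oplus_of_meet_eq_zero hL hDi
      (A.meet_eq_zero_of_sharp hL hu (A.D_le_compl hDi)) hD (A.D_comm _ _ hn.2)
    obtain ⟨hib, hDu, -⟩ := A.assoc u (A.nsmul i b) b hDi hDb
    rwa [A.oplus_comm _ _ hib] at hDu

lemma D_nsmul_nsmul (hL : A.LatticeOrdered) (hAtomic : A.Atomic) {a b : E} (ha : A.Atom a)
    (hb : A.Atom b) (hne : a ≠ b) (hD : A.D a b) {m n : ℕ} (hm : A.nsmulDef m a)
    (hmax : ¬ A.nsmulDef (m + 1) a) (hn : A.nsmulDef n b) :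
    A.D (A.nsmul m a) (A.nsmul n b) :=
  A.D_nsmul_of_sharp hL (A.sharp_nsmul hL hAtomic ha hm hmax)
    (A.D_nsmul_of_atom hL ha hb hne.symm hD hm) hn

lemma exists_sumDef_of_pairwise_sharp (hL : A.LatticeOrdered) {ι : Type v} {w : ι → E}
    (hsharp : ∀ k, A.Sharp (w k)) (hpair : Pairwise fun k k' => A.D (w k) (w k'))
    (l : List ι) (hl : l.Nodup) :
    ∃ s, A.SumDef (l.map w) s ∧ ∀ c, (∀ k ∈ l, A.D (w k) c) → A.D s c := by
  induction l with
  | nil => exact ⟨A.zero, SumDef.nil, fun c _ => A.D_zero_left c⟩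
  | cons k l ih =>
    obtain ⟨hk, hl⟩ := List.nodup_cons.mp hl
    obtain ⟨s, hs, hsc⟩ := ih hl
    have hD : A.D (w k) s :=
      A.D_comm _ _ (hsc _ fun k' hk' => hpair fun h => hk (h ▸ hk'))
    refine ⟨A.oplus (w k) s, SumDef.cons hs hD, fun c hc => ?_⟩
    exact A.D_oplus_of_meet_eq_zero hL hD
      (A.meet_eq_zero_of_sharp hL (hsharp k) (A.D_le_compl hD)) (hc k List.mem_cons_self)
      (hsc c fun k' hk' => hc k' (List.mem_cons_of_mem k hk'))

lemma orthogonal_of_pairwise_sharp (hL : A.LatticeOrdered) {ι : Type v} {w : ι → E}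
    (hsharp : ∀ k, A.Sharp (w k)) (hpair : Pairwise fun k k' => A.D (w k) (w k')) :
    A.Orthogonal w :=
  fun l hl => (A.exists_sumDef_of_pairwise_sharp hL hsharp hpair l hl).imp fun _ h => h.1

end Atoms

section Supremum

def multiples (f : E → ℕ) (e : E) : E := A.nsmul (f e) e

structure Admissible (T : Set E) (f : E → ℕ) : Prop where
  atom : ∀ e, f e ≠ 0 → A.Atom e ∧ A.nsmulDef (f e) e
  D_of_ne : ∀ e e', f e ≠ 0 → f e' ≠ 0 → e ≠ e' → A.D e e'
  le_of_isUB : ∀ s ∈ A.finiteSums (A.multiples f), ∀ z, A.IsUB T z → A.le s z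

variable {A} {T : Set E} {f : E → ℕ}

lemma Admissible.nsmulDef (hf : A.Admissible T f) (e : E) : A.nsmulDef (f e) e := by
  by_cases he : f e = 0
  · rw [he]; trivial
  · exact (hf.atom e he).2

variable (A) in
lemma admissible_zero (T : Set E) : A.Admissible T 0 where
  atom _ h := absurd rfl h
  D_of_ne _ _ h := absurd rfl h
  le_of_isUB := by
    rintro s ⟨l, -, hs⟩ z -
    rw [A.sumDef_map_const_zero l hs]
    exact A.zero_le z

lemma admissible_sSup_of_isChain {c : Set (E → ℕ)} (hc : IsChain (· ≤ ·) c)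
    (hne : c.Nonempty) (hcA : ∀ g ∈ c, A.Admissible T g)
    (hbdd : ∀ e, BddAbove ((fun g => g e) '' c)) :
    A.Admissible T fun e => sSup ((fun g => g e) '' c) := by
  classical
  have hagree := hc.exists_forall_eq_sSup_eval hne hbdd
  refine ⟨fun e he => ?_, fun e e' he he' hne => ?_, ?_⟩
  · obtain ⟨g, hg, hgF⟩ := hagree {e}
    rw [← hgF e (Finset.mem_singleton_self e)] at he ⊢
    exact (hcA g hg).atom e he
  · obtain ⟨g, hg, hgF⟩ := hagree {e, e'}
    rw [← hgF e (by simp)] at he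
    rw [← hgF e' (by simp)] at he'
    exact (hcA g hg).D_of_ne e e' he he' hne
  · rintro s ⟨l, hl, hs⟩ z hz
    obtain ⟨g, hg, hgF⟩ := hagree l.toFinset
    have hmap :
        l.map (A.multiples fun e => sSup ((fun g => g e) '' c)) = l.map (A.multiples g) :=
      List.map_congr_left fun e he => by
        simp only [multiples, hgF e (List.mem_toFinset.mpr he)]
    exact (hcA g hg).le_of_isUB s ⟨l, hl, hmap ▸ hs⟩ z hz

lemma bddAbove_eval_of_admissible (hArch : A.IsArchimedean) {c : Set (E → ℕ)}
    (hcA : ∀ g ∈ c, A.Admissible T g) (e : E) : BddAbove ((fun g => g e) '' c) := by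
  by_cases he : e = A.zero
  · refine ⟨0, ?_⟩
    rintro _ ⟨g, hg, rfl⟩
    exact Nat.le_zero.mpr (by_contra fun hge => ((hcA g hg).atom e hge).1.1 he)
  · obtain ⟨n, -, -, hn⟩ := A.exists_nsmulDef_maximal hArch he
    refine ⟨n, ?_⟩
    rintro _ ⟨g, hg, rfl⟩
    exact A.le_of_nsmulDef hn ((hcA g hg).nsmulDef e)

variable (A) in
lemma exists_maximal_admissible (hArch : A.IsArchimedean) (T : Set E) :
    ∃ f, Maximal (A.Admissible T) f := by
  have hchain : ∀ c ⊆ {f | A.Admissible T f}, IsChain (· ≤ ·) c →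
      ∀ g ∈ c, ∃ ub ∈ {f | A.Admissible T f}, ∀ g' ∈ c, g' ≤ ub :=
    fun c hcA hc g hg => ⟨_, admissible_sSup_of_isChain hc ⟨g, hg⟩ hcA
      (bddAbove_eval_of_admissible hArch hcA),
      fun g' hg' e => le_csSup (bddAbove_eval_of_admissible hArch hcA e) ⟨g', hg', rfl⟩⟩
  obtain ⟨f, -, hf⟩ := zorn_le_nonempty₀ _ hchain 0 (A.admissible_zero T)
  exact ⟨f, hf⟩

lemma Admissible.exists_hasOrthoSum (hL : A.LatticeOrdered) (hArch : A.IsArchimedean)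
    (hAtomic : A.Atomic) (hSO : A.SharplyOrthocomplete) (hf : A.Admissible T f) :
    ∃ v, A.HasOrthoSum (A.multiples f) v := by
  classical
  choose! ord hord hord_max using fun a (ha : a ≠ A.zero) =>
    (A.exists_nsmulDef_maximal hArch ha).imp fun _ h => h.2
  let w : E → E := fun e => if f e = 0 then A.zero else A.nsmul (ord e) e
  have hsharp : ∀ e, A.Sharp (w e) := by
    intro e
    by_cases he : f e = 0
    · simp only [w, if_pos he]
      exact A.sharp_zero
    · have ha := (hf.atom e he).1
      simp only [w, if_neg he]
      exact A.sharp_nsmul hL hAtomic ha (hord e ha.1) (hord_max e ha.1)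
  have hpair : Pairwise fun e e' => A.D (w e) (w e') := by
    intro e e' hne
    by_cases he : f e = 0
    · simp only [w, if_pos he]
      exact A.D_zero_left _
    by_cases he' : f e' = 0
    · simp only [w, if_pos he']
      exact A.D_zero_right _
    have ha := (hf.atom e he).1
    simp only [w, if_neg he, if_neg he']
    exact A.D_nsmul_nsmul hL hAtomic ha (hf.atom e' he').1 hne (hf.D_of_ne e e' he he' hne)
      (hord e ha.1) (hord_max e ha.1) (hord e' (hf.atom e' he').1.1)
  have hle : ∀ e, A.le (A.multiples f e) (w e) := by
    intro e
    by_cases he : f e = 0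
    · simp only [multiples, w, if_pos he, he]
      exact A.le_refl _
    · have ha := (hf.atom e he).1
      simp only [w, if_neg he]
      exact A.nsmul_mono (A.le_of_nsmulDef (hord_max e ha.1) (hf.nsmulDef e)) (hord e ha.1)
  exact hSO E (A.multiples f) w hsharp (A.orthogonal_of_pairwise_sharp hL hsharp hpair) hle

lemma Admissible.le_of_hasOrthoSum (hf : A.Admissible T f) {v z : E}
    (hv : A.HasOrthoSum (A.multiples f) v) (hz : A.IsUB T z) : A.le v z :=
  hv.2.2.2 z (Set.mem_univ z) fun s hs => hf.le_of_isUB s hs z hz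

lemma mem_finiteSums_update_succ [DecidableEq E] {b s : E} (hb : A.D b (A.nsmul (f b) b))
    (hs : s ∈ A.finiteSums (A.multiples (Function.update f b (f b + 1)))) :
    s ∈ A.finiteSums (A.multiples f) ∨
      ∃ s' ∈ A.finiteSums (A.multiples f), A.D b s' ∧ s = A.oplus b s' := by
  obtain ⟨l, hl, hs⟩ := hs
  have hmap : ∀ l' : List E, b ∉ l' →
      l'.map (A.multiples (Function.update f b (f b + 1))) = l'.map (A.multiples f) :=
    fun l' hb' => List.map_congr_left fun e he => by
      rw [multiples, multiples, Function.update_of_ne (ne_of_mem_of_not_mem he hb')]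
  by_cases hbl : b ∈ l
  · right
    have hs' := A.sumDef_perm ((List.perm_cons_erase hbl).map _) hs
    rw [List.map_cons, hmap _ hl.not_mem_erase] at hs'
    obtain ⟨s₂, hs₂, hD, rfl⟩ := A.sumDef_cons_inv hs'
    rw [multiples, Function.update_self] at hD ⊢
    obtain ⟨hD₁, hD₂, heq⟩ := A.assoc b (A.nsmul (f b) b) s₂ hb hD
    refine ⟨_, ⟨b :: l.erase b, List.nodup_cons.mpr ⟨hl.not_mem_erase, hl.erase b⟩, ?_⟩,
      hD₂, heq⟩
    exact SumDef.cons hs₂ hD₁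
  · exact Or.inl ⟨l, hl, hmap l hbl ▸ hs⟩

lemma Admissible.update_succ [DecidableEq E] (hf : A.Admissible T f) {v b : E}
    (hv : A.HasOrthoSum (A.multiples f) v) (hb : A.Atom b) (hDvb : A.D v b)
    (hvb : ∀ z, A.IsUB T z → A.le (A.oplus v b) z) :
    A.Admissible T (Function.update f b (f b + 1)) := by
  have hfv : ∀ e, A.le (A.nsmul (f e) e) v := fun e => hv.2.2.1 _ (A.mem_finiteSums_self _ e)
  have hDb : A.D b (A.nsmul (f b) b) := A.D_comm _ _ (A.D_mono_left hDvb (hfv b))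
  have hDe : ∀ e, f e ≠ 0 → A.D e b := fun e he =>
    A.D_mono_left hDvb (A.le_trans (A.le_nsmul he (hf.nsmulDef e)) (hfv e))
  refine ⟨fun e he => ?_, fun e e' he he' hne => ?_, fun s hs z hz => ?_⟩
  · rcases eq_or_ne e b with rfl | heb
    · rw [Function.update_self]
      exact ⟨hb, hf.nsmulDef e, hDb⟩
    · rw [Function.update_of_ne heb] at he ⊢
      exact hf.atom e he
  · rcases eq_or_ne e b with rfl | heb
    · rw [Function.update_of_ne hne.symm] at he'
      exact A.D_comm _ _ (hDe e' he')
    rcases eq_or_ne e' b with rfl | he'b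
    · rw [Function.update_of_ne heb] at he
      exact hDe e he
    rw [Function.update_of_ne heb] at he
    rw [Function.update_of_ne he'b] at he'
    exact hf.D_of_ne e e' he he' hne
  · rcases A.mem_finiteSums_update_succ hDb hs with hs | ⟨s', hs', -, rfl⟩
    · exact A.le_trans (hv.2.2.1 s hs) (A.le_trans (A.le_oplus_left hDvb) (hvb z hz))
    · refine A.le_trans (A.oplus_le_oplus_right (hv.2.2.1 s' hs') (A.D_comm _ _ hDvb)) ?_
      rw [A.oplus_comm _ _ (A.D_comm _ _ hDvb)]
      exact hvb z hz

lemma isUB_of_maximal_admissible (hL : A.LatticeOrdered) (hAtomic : A.Atomic)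
    (hf : Maximal (A.Admissible T) f) {v : E} (hv : A.HasOrthoSum (A.multiples f) v) :
    A.IsUB T v := by
  classical
  intro t ht
  by_contra htv
  obtain ⟨e₀, hD, hve₀⟩ := A.le_join_right hL t v
  have he₀ : e₀ ≠ A.zero := by
    rintro rfl
    rw [A.oplus_zero] at hve₀
    exact htv (hve₀ ▸ A.le_join_left hL t v)
  obtain ⟨b, hb, hbe₀⟩ := hAtomic e₀ he₀
  have hvb : ∀ z, A.IsUB T z → A.le (A.oplus v b) z := fun z hz =>
    A.le_trans (A.oplus_le_oplus_right hbe₀ hD)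
      (hve₀ ▸ A.join_le hL (hz t ht) (hf.1.le_of_hasOrthoSum hv hz))
  have hfg : f ≤ Function.update f b (f b + 1) := by
    intro e
    rcases eq_or_ne e b with rfl | heb
    · simp
    · rw [Function.update_of_ne heb]
  have hgf := hf.2 (hf.1.update_succ hv hb (A.D_mono_right hD hbe₀) hvb) hfg b
  simp at hgf

variable (A) in
lemma exists_isSupIn (hL : A.LatticeOrdered) (hArch : A.IsArchimedean) (hAtomic : A.Atomic)
    (hSO : A.SharplyOrthocomplete) (T : Set E) : ∃ v, A.IsSupIn Set.univ T v := by
  obtain ⟨f, hf⟩ := A.exists_maximal_admissible hArch T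
  obtain ⟨v, hv⟩ := hf.1.exists_hasOrthoSum hL hArch hAtomic hSO
  exact ⟨v, Set.mem_univ v, isUB_of_maximal_admissible hL hAtomic hf hv,
    fun z _ hz => hf.1.le_of_hasOrthoSum hv hz⟩

end Supremum

lemma complete_of_forall_exists_isSupIn (h : ∀ T : Set E, ∃ v, A.IsSupIn Set.univ T v) :
    A.Complete := by
  refine fun S => ⟨h S, ?_⟩
  obtain ⟨v, hv⟩ := h {z | A.IsLB S z}
  exact ⟨v, Set.mem_univ v, fun s hs => hv.2.2 s (Set.mem_univ s) fun z hz => hz s hs,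
    fun z _ hz => hv.2.1 z hz⟩

end EffectAlgebra

/-- Every sharply orthocomplete Archimedean atomic lattice effect algebra is
complete. -/
theorem stmt18 {E : Type u} (A : EffectAlgebra E) (hL : A.LatticeOrdered)
    (hArch : A.IsArchimedean) (hAtomic : A.Atomic)
    (hSO : A.SharplyOrthocomplete) :
    A.Complete :=
  A.complete_of_forall_exists_isSupIn (A.exists_isSupIn hL hArch hAtomic hSO)
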